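/- arXiv:1304.5849 — 3 statements merged into one kernel-verified Lean document; each statement's English description precedes it below -/
import Mathlib

section
/- (Small universe lemma) Let P and Q be finite posets with k = |P|, and suppose f is a witness for P ⪯ Q. Then there exists a subset Q⁰ of the elements of Q with |Q⁰| ≤ 2^k · k such that every partial function f' from the elements of Q to the elements of P that agrees with f on Q⁰ (i.e., f'(q) = f(q) for all q ∈ Q⁰, where f is defined on all of Q⁰) is also a witness for P ⪯ Q. -/
/-- A chain in a poset: a finite sequence `(v_1, …, v_n)` with `v_i < v_j` for `i < j`,
modeled as a strictly increasing list. -/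
def IsPosetChain {α : Type*} [PartialOrder α] (l : List α) : Prop :=
  l.Chain' (· < ·)

/-- A partial function `f : Q ⇀ P` (modeled as `Q → Option P`) is a witness for `P ⪯ Q`:
for every chain `(c_1, …, c_n)` in `P` there is a chain `(c'_1, …, c'_n)` in `Q`
with `f (c'_i) = c_i` for all `i`. -/
def IsChainMinorWitness {P Q : Type*} [PartialOrder P] [PartialOrder Q]
    (f : Q → Option P) : Prop :=
  ∀ c : List P, IsPosetChain c →
    ∃ c' : List Q, IsPosetChain c' ∧ c'.map f = c.map some

/-- `P` is a chain minor of `Q` if there is a witness. -/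
def ChainMinor (P Q : Type*) [PartialOrder P] [PartialOrder Q] : Prop :=
  ∃ f : Q → Option P, IsChainMinorWitness f

/-! A chain of `P` is determined by its set of elements, so `P` has at most `2 ^ k` chains, each
of length at most `k`. Fix one lift of each chain along `f` and let `Q⁰` be the union of their
elements: a partial function agreeing with `f` on `Q⁰` maps these same lifts onto the same chains. -/

namespace IsPosetChain

variable {α : Type*} [PartialOrder α] {l l' : List α}

lemma pairwise (hl : IsPosetChain l) : l.Pairwise (· < ·) :=
  List.isChain_iff_pairwise.mp hl

lemma nodup (hl : IsPosetChain l) : l.Nodup :=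
  hl.pairwise.imp ne_of_lt

lemma length_le_card [Fintype α] (hl : IsPosetChain l) : l.length ≤ Fintype.card α :=
  hl.nodup.length_le_card

lemma eq_of_toFinset_eq [DecidableEq α] (hl : IsPosetChain l) (hl' : IsPosetChain l')
    (h : l.toFinset = l'.toFinset) : l = l' :=
  (List.perm_of_nodup_nodup_toFinset_eq hl.nodup hl'.nodup h).eq_of_pairwise
    (fun _ _ _ _ hab hba => absurd (hab.trans hba) (lt_irrefl _)) hl.pairwise hl'.pairwise

lemma injOn_toFinset [DecidableEq α] : Set.InjOn List.toFinset {l : List α | IsPosetChain l} :=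
  fun _ hl _ hl' h => eq_of_toFinset_eq hl hl' h

end IsPosetChain

section Chains

variable (α : Type*) [PartialOrder α] [Fintype α]

lemma finite_setOf_isPosetChain : {l : List α | IsPosetChain l}.Finite := by
  classical
  exact (Set.toFinite _).of_finite_image IsPosetChain.injOn_toFinset

noncomputable def posetChains : Finset (List α) :=
  (finite_setOf_isPosetChain α).toFinset

variable {α}

@[simp]
lemma mem_posetChains {l : List α} : l ∈ posetChains α ↔ IsPosetChain l :=
  Set.Finite.mem_toFinset _

lemma card_posetChains_le : (posetChains α).card ≤ 2 ^ Fintype.card α := by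
  classical
  calc (posetChains α).card ≤ (Finset.univ : Finset (Finset α)).card :=
        Finset.card_le_card_of_injOn List.toFinset (fun _ _ => Finset.mem_univ _)
          (IsPosetChain.injOn_toFinset.mono fun _ hl => mem_posetChains.mp hl)
    _ = 2 ^ Fintype.card α := by rw [Finset.card_univ, Fintype.card_finset]

end Chains

section Lifts

variable {P Q : Type*} {f f' : Q → Option P} {c : List P} {c' : List Q}

lemma length_eq_of_map_eq_map_some (h : c'.map f = c.map some) : c'.length = c.length := by
  simpa using congrArg List.length h

lemma isSome_of_map_eq_map_some (h : c'.map f = c.map some) {q : Q} (hq : q ∈ c') :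
    (f q).isSome := by
  obtain ⟨p, -, hp⟩ := List.mem_map.mp (h ▸ List.mem_map_of_mem hq : f q ∈ c.map some)
  rw [← hp]
  rfl

lemma map_eq_map_some_of_eqOn (h : c'.map f = c.map some) (hff' : ∀ q ∈ c', f' q = f q) :
    c'.map f' = c.map some :=
  h ▸ List.map_congr_left hff'

lemma IsChainMinorWitness.exists_finset_lifts [PartialOrder P] [PartialOrder Q] [Fintype P]
    (hf : IsChainMinorWitness f) :
    ∃ Q0 : Finset Q, Q0.card ≤ 2 ^ Fintype.card P * Fintype.card P
      ∧ (∀ q ∈ Q0, (f q).isSome)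
      ∧ ∀ c : List P, IsPosetChain c →
          ∃ c' : List Q, IsPosetChain c' ∧ c'.map f = c.map some ∧ ∀ q ∈ c', q ∈ Q0 := by
  classical
  choose lift hlift_chain hlift_map using
    fun (c : List P) (hc : c ∈ posetChains P) => hf c (mem_posetChains.mp hc)
  let Q0 := (posetChains P).attach.biUnion fun c => (lift c.1 c.2).toFinset
  have hlift_mem {c : List P} (hc : c ∈ posetChains P) {q : Q} (hq : q ∈ lift c hc) : q ∈ Q0 :=
    Finset.mem_biUnion.mpr ⟨⟨c, hc⟩, Finset.mem_attach _ _, List.mem_toFinset.mpr hq⟩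
  refine ⟨Q0, ?_, ?_, fun c hc => ?_⟩
  · calc Q0.card ≤ (posetChains P).attach.card * Fintype.card P := by
          refine Finset.card_biUnion_le_card_mul _ _ _ fun ⟨c, hc⟩ _ => ?_
          calc (lift c hc).toFinset.card ≤ (lift c hc).length := List.toFinset_card_le _
            _ = c.length := length_eq_of_map_eq_map_some (hlift_map c hc)
            _ ≤ Fintype.card P := (mem_posetChains.mp hc).length_le_card
      _ ≤ 2 ^ Fintype.card P * Fintype.card P := by
          rw [Finset.card_attach]
          exact Nat.mul_le_mul_right _ card_posetChains_le
  · intro q hq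
    obtain ⟨⟨c, hc⟩, -, hqc⟩ := Finset.mem_biUnion.mp hq
    exact isSome_of_map_eq_map_some (hlift_map c hc) (List.mem_toFinset.mp hqc)
  · have hc' := mem_posetChains.mpr hc
    exact ⟨lift c hc', hlift_chain c hc', hlift_map c hc', fun _ => hlift_mem hc'⟩

end Lifts

theorem small_universe_general {P Q : Type*} [Fintype P] [PartialOrder P]
    [PartialOrder Q] (k : ℕ) (hk : k = Fintype.card P)
    (f : Q → Option P) (hf : IsChainMinorWitness f) :
    ∃ Q0 : Finset Q, Q0.card ≤ 2 ^ k * k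
      ∧ (∀ q ∈ Q0, (f q).isSome)
      ∧ ∀ f' : Q → Option P, (∀ q ∈ Q0, f' q = f q) → IsChainMinorWitness f' := by
  subst hk
  obtain ⟨Q0, hcard, hsome, hlifts⟩ := hf.exists_finset_lifts
  refine ⟨Q0, hcard, hsome, fun f' hff' c hc => ?_⟩
  obtain ⟨c', hc', hmap, hmem⟩ := hlifts c hc
  exact ⟨c', hc', map_eq_map_some_of_eqOn hmap fun q hq => hff' q (hmem q hq)⟩

/-- Small universe lemma: if `f` is a witness for `P ⪯ Q` and `k = |P|`, then there is a
set `Q⁰` of at most `2 ^ k * k` elements of `Q` on which `f` is defined, such that every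
partial function `f'` agreeing with `f` on `Q⁰` is also a witness for `P ⪯ Q`. -/
theorem small_universe {P Q : Type*} [Fintype P] [PartialOrder P]
    [Fintype Q] [PartialOrder Q] (k : ℕ) (hk : k = Fintype.card P)
    (f : Q → Option P) (hf : IsChainMinorWitness f) :
    ∃ Q0 : Finset Q, Q0.card ≤ 2 ^ k * k
      ∧ (∀ q ∈ Q0, (f q).isSome)
      ∧ ∀ f' : Q → Option P, (∀ q ∈ Q0, f' q = f q) → IsChainMinorWitness f' :=
  small_universe_general k hk f hf
end

section
/- Every finite poset P with p elements and height at most q is a chain minor of 2^p · C_q, the poset consisting of 2^p pairwise incomparable (disjoint) chains, each on q elements. -/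
/-- The poset `m·C_q`: the disjoint union of `m` chains, each on `q` elements.
Elements of different chains are incomparable. -/
def DisjointChains (m q : ℕ) : Type := Fin m × Fin q

instance (m q : ℕ) : PartialOrder (DisjointChains m q) where
  le x y := x.1 = y.1 ∧ x.2 ≤ y.2
  le_refl x := ⟨rfl, le_refl _⟩
  le_trans x y z h1 h2 := ⟨h1.1.trans h2.1, h1.2.trans h2.2⟩
  le_antisymm x y h1 h2 := Prod.ext h1.1 (le_antisymm h1.2 h2.2)


/-! Each chain of `P` is determined by its set of elements, so it suffices to reserve one chain
of `m·C_q` for every subset `S` of `P`: the witness sends the `i`-th element of the chain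
labelled `S` to the `i`-th element of the chain with support `S`, if there is one. -/

theorem IsPosetChain.eq_of_mem_iff {α : Type*} [PartialOrder α] {l₁ l₂ : List α}
    (h₁ : IsPosetChain l₁) (h₂ : IsPosetChain l₂) (h : ∀ a, a ∈ l₁ ↔ a ∈ l₂) : l₁ = l₂ :=
  (List.isChain_iff_pairwise.1 h₁).eq_of_mem_iff (List.isChain_iff_pairwise.1 h₂) h

namespace DisjointChains

variable {m q : ℕ}

def mk (k : Fin m) (i : Fin q) : DisjointChains m q := (k, i)

theorem mk_lt_mk (k : Fin m) {i j : Fin q} (h : i < j) : mk k i < mk k j :=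
  lt_of_le_not_ge ⟨rfl, h.le⟩ fun hle => hle.2.not_gt h

theorem isPosetChain_ofFn_mk {n : ℕ} (k : Fin m) {f : Fin n → Fin q} (hf : StrictMono f) :
    IsPosetChain (List.ofFn fun i => mk k (f i)) :=
  List.isChain_iff_pairwise.2 <| List.pairwise_ofFn.2 fun _ _ hij => mk_lt_mk k (hf hij)

variable {P : Type*} [PartialOrder P]

open Classical in
noncomputable def supportWitness (g : Fin m → Set P) (x : DisjointChains m q) : Option P :=
  if h : ∃ l : List P, IsPosetChain l ∧ {a | a ∈ l} = g x.1 then h.choose[(x.2 : ℕ)]? else none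

theorem supportWitness_mk {g : Fin m → Set P} {l : List P} (hl : IsPosetChain l) {k : Fin m}
    (hk : g k = {a | a ∈ l}) (i : Fin q) : supportWitness g (mk k i) = l[(i : ℕ)]? := by
  have hex : ∃ l : List P, IsPosetChain l ∧ {a | a ∈ l} = g k := ⟨l, hl, hk.symm⟩
  have hchoose : hex.choose = l :=
    hex.choose_spec.1.eq_of_mem_iff hl (Set.ext_iff.1 (hex.choose_spec.2.trans hk))
  exact (dif_pos hex).trans (congrArg (·[(i : ℕ)]?) hchoose)

theorem isChainMinorWitness_supportWitness {g : Fin m → Set P} (hg : g.Surjective)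
    (hheight : ∀ l : List P, IsPosetChain l → l.length ≤ q) :
    IsChainMinorWitness (supportWitness (q := q) g) := by
  intro l hl
  obtain ⟨k, hk⟩ := hg {a | a ∈ l}
  have hlen := hheight l hl
  refine ⟨List.ofFn fun i : Fin l.length => mk k (i.castLE hlen),
    isPosetChain_ofFn_mk k (Fin.strictMono_castLE hlen), ?_⟩
  refine List.ext_getElem (by simp) fun i _ _ => ?_
  simp only [List.getElem_map, List.getElem_ofFn]
  rw [supportWitness_mk hl hk]
  simp

end DisjointChains

/-- Every finite poset `P` with `p` elements and height at most `q` (every chain of `P`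
has at most `q` elements) is a chain minor of `2^p · C_q`, the disjoint union of `2^p`
chains, each on `q` elements. -/
theorem chainMinor_disjointChains (P : Type*) [Fintype P] [PartialOrder P]
    (p q : ℕ) (hp : p = Fintype.card P)
    (hheight : ∀ l : List P, IsPosetChain l → l.length ≤ q) :
    ChainMinor P (DisjointChains (2 ^ p) q) := by
  have hcard : Fintype.card (Set P) = 2 ^ p := by rw [Fintype.card_set, hp]
  let e : Set P ≃ Fin (2 ^ p) := Fintype.equivFinOfCardEq hcard
  exact ⟨_, DisjointChains.isChainMinorWitness_supportWitness e.symm.surjective hheight⟩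
end

section
/- (Correctness of the witness-checking dynamic program, one chain) Let P and Q be finite posets, let f be a partial function from the elements of Q to the elements of P, and let (c_1, ..., c_p) be a chain in P. For q an element of Q, define maxc(q) to be the largest j ≥ 0 such that there exists a chain (c'_1, ..., c'_j) in Q with all c'_i ≤ q and f(c'_i) = c_i for all i. Then maxc satisfies the recurrence: maxc(q) = j if max over all v < q of maxc(v) equals j − 1 and f(q) = c_j, and maxc(q) = max over all v < q of maxc(v) otherwise (with the convention that the maximum over the empty set is 0). Consequently, there exists a chain (c'_1, ..., c'_p) in Q with f(c'_i) = c_i for all i if and only if maxc(q) = p for some element q of Q. -/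
/-! For `D ⊆ Q` let `liftLengths f c D` be the set of `j` such that `c_1, …, c_j` lift along `f`
to a chain inside `D`; `maxc q` is the greatest element for `D = Iic q`. A nonempty lift lies
below its last element, so the greatest element `M` for `D = Iio q` is the maximum of `maxc v`
over `v < q`. A lift inside `Iic q` either avoids `q`, and then lies in `Iio q`, or ends at `q`
and extends a lift of length one less inside `Iio q`; conversely a lift inside `Iio q` extends
by `q` when `f q` is the next entry of `c`. Hence `maxc q` is `M + 1` if `f q = c_{M+1}` and `M`
otherwise. -/

open Set

-- `(c)[i]?`, as in the statement of `maxc_recurrence`: `c[i]?` would parse as cycle notation.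
theorem List.map_append_singleton_eq_map_some_take_succ_iff {α β : Type*} {f : α → Option β}
    {c : List β} {l : List α} {x : α} :
    (l ++ [x]).map f = (c.take (l.length + 1)).map some ↔
      l.map f = (c.take l.length).map some ∧ l.length < c.length ∧ f x = (c)[l.length]? := by
  rcases lt_or_ge l.length c.length with h | h
  · simp only [List.take_add_one, List.getElem?_eq_getElem h, Option.toList_some, List.map_append,
      List.map_cons, List.map_nil, List.append_singleton_inj, h, true_and]
  · simp only [h.not_gt, false_and, and_false, iff_false]
    intro he
    have := congrArg List.length he
    simp only [List.length_map, List.length_append, List.length_singleton, List.length_take] at this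
    omega

section Lifts

variable {P Q : Type*} [PartialOrder Q] {f : Q → Option P} {c : List P}

theorem isPosetChain_iff_pairwise {l : List Q} : IsPosetChain l ↔ l.Pairwise (· < ·) :=
  List.isChain_iff_pairwise

theorem isPosetChain_append_singleton {l : List Q} {x : Q} :
    IsPosetChain (l ++ [x]) ↔ IsPosetChain l ∧ ∀ y ∈ l, y < x := by
  simp [isPosetChain_iff_pairwise, List.pairwise_append]

def liftLengths (f : Q → Option P) (c : List P) (D : Set Q) : Set ℕ :=
  {j | ∃ c' : List Q, IsPosetChain c' ∧ c'.length = j ∧ (∀ x ∈ c', x ∈ D) ∧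
    c'.map f = (c.take j).map some}

theorem zero_mem_liftLengths (D : Set Q) : 0 ∈ liftLengths f c D :=
  ⟨[], List.IsChain.nil, rfl, by simp, rfl⟩

theorem liftLengths_mono {D E : Set Q} (h : D ⊆ E) : liftLengths f c D ⊆ liftLengths f c E :=
  fun _ ⟨c', hc', hlen, hD, hmap⟩ => ⟨c', hc', hlen, fun x hx => h (hD x hx), hmap⟩

theorem le_length_of_mem_liftLengths {D : Set Q} {j : ℕ} (hj : j ∈ liftLengths f c D) :
    j ≤ c.length := by
  obtain ⟨c', -, rfl, -, hmap⟩ := hj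
  simpa using congrArg List.length hmap

theorem exists_mem_liftLengths_Iic {D : Set Q} {j : ℕ} (hj : j ∈ liftLengths f c D)
    (hj0 : j ≠ 0) : ∃ v ∈ D, j ∈ liftLengths f c (Iic v) := by
  obtain ⟨c', hchain, rfl, hD, hmap⟩ := hj
  obtain ⟨l, v, rfl⟩ := (List.eq_nil_or_concat' c').resolve_left (by rintro rfl; exact hj0 rfl)
  have hlv := (isPosetChain_append_singleton.1 hchain).2
  exact ⟨v, hD v (by simp), l ++ [v], hchain, rfl,
    List.forall_mem_append.2 ⟨fun y hy => (hlv y hy).le, List.forall_mem_singleton.2 le_rfl⟩, hmap⟩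

theorem succ_mem_liftLengths_Iic_of_mem_Iio {q : Q} {j : ℕ} (hj : j ∈ liftLengths f c (Iio q))
    (hjc : j < c.length) (hfq : f q = (c)[j]?) : j + 1 ∈ liftLengths f c (Iic q) := by
  obtain ⟨l, hchain, rfl, hlt, hmap⟩ := hj
  exact ⟨l ++ [q], isPosetChain_append_singleton.2 ⟨hchain, hlt⟩, by simp,
    List.forall_mem_append.2 ⟨fun y hy => (hlt y hy).le, List.forall_mem_singleton.2 le_rfl⟩,
    List.map_append_singleton_eq_map_some_take_succ_iff.2 ⟨hmap, hjc, hfq⟩⟩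

theorem mem_liftLengths_Iio_or_of_succ_mem_Iic {q : Q} {j : ℕ}
    (hj : j + 1 ∈ liftLengths f c (Iic q)) :
    j + 1 ∈ liftLengths f c (Iio q) ∨ j ∈ liftLengths f c (Iio q) ∧ f q = (c)[j]? := by
  obtain ⟨c', hchain, hlen, hle, hmap⟩ := hj
  obtain ⟨l, x, rfl⟩ := (List.eq_nil_or_concat' c').resolve_left (by rintro rfl; simp at hlen)
  obtain ⟨hl, hlx⟩ := isPosetChain_append_singleton.1 hchain
  have hl_len : l.length = j := by simpa using hlen
  rcases (hle x (by simp)).lt_or_eq with hxq | rfl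
  · exact .inl ⟨l ++ [x], hchain, hlen, List.forall_mem_append.2
      ⟨fun y hy => (hlx y hy).trans hxq, List.forall_mem_singleton.2 hxq⟩, hmap⟩
  · subst hl_len
    obtain ⟨hmap_l, -, hfx⟩ := List.map_append_singleton_eq_map_some_take_succ_iff.1 hmap
    exact .inr ⟨⟨l, hl, rfl, hlx, hmap_l⟩, hfx⟩

theorem length_mem_liftLengths_univ_iff :
    c.length ∈ liftLengths f c univ ↔ ∃ c' : List Q, IsPosetChain c' ∧ c'.map f = c.map some := by
  constructor
  · rintro ⟨c', hc', -, -, hmap⟩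
    exact ⟨c', hc', by rwa [List.take_length] at hmap⟩
  · rintro ⟨c', hc', hmap⟩
    refine ⟨c', hc', by simpa using congrArg List.length hmap, fun _ _ => trivial, ?_⟩
    rwa [List.take_length]

variable {q : Q} {m M : ℕ}

theorem eq_or_eq_succ_of_isGreatest_liftLengths (hm : IsGreatest (liftLengths f c (Iic q)) m)
    (hM : IsGreatest (liftLengths f c (Iio q)) M) : m = M ∨ m = M + 1 ∧ f q = (c)[M]? := by
  have hMm : M ≤ m := hm.2 (liftLengths_mono Iio_subset_Iic_self hM.1)
  rcases m with _ | j
  · exact .inl (by omega)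
  · rcases mem_liftLengths_Iio_or_of_succ_mem_Iic hm.1 with hj | ⟨hj, hfq⟩
    · exact .inl (le_antisymm (hM.2 hj) hMm)
    · rcases (hM.2 hj).lt_or_eq with hlt | rfl
      · exact .inl (by omega)
      · exact .inr ⟨rfl, hfq⟩

theorem eq_succ_of_isGreatest_liftLengths (hm : IsGreatest (liftLengths f c (Iic q)) m)
    (hM : IsGreatest (liftLengths f c (Iio q)) M) (hMc : M < c.length) (hfq : f q = (c)[M]?) :
    m = M + 1 := by
  have := hm.2 (succ_mem_liftLengths_Iic_of_mem_Iio hM.1 hMc hfq)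
  rcases eq_or_eq_succ_of_isGreatest_liftLengths hm hM with h | h <;> omega

theorem eq_of_isGreatest_liftLengths (hm : IsGreatest (liftLengths f c (Iic q)) m)
    (hM : IsGreatest (liftLengths f c (Iio q)) M) (h : ¬(M < c.length ∧ f q = (c)[M]?)) :
    m = M := by
  refine (eq_or_eq_succ_of_isGreatest_liftLengths hm hM).resolve_right fun ⟨hmM, hfq⟩ => h ⟨?_, hfq⟩
  have := le_length_of_mem_liftLengths hm.1
  omega

theorem isGreatest_liftLengths_Iio [Fintype Q] [DecidableRel ((· < ·) : Q → Q → Prop)]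
    {maxc : Q → ℕ} (hmaxc : ∀ v, IsGreatest (liftLengths f c (Iic v)) (maxc v)) (q : Q) :
    IsGreatest (liftLengths f c (Iio q)) ((Finset.univ.filter (· < q)).sup maxc) := by
  refine ⟨?_, fun j hj => ?_⟩
  · rcases (Finset.univ.filter (· < q)).eq_empty_or_nonempty with hempty | hne
    · rw [hempty, Finset.sup_empty]
      exact zero_mem_liftLengths _
    · obtain ⟨v, hv, hsup⟩ := Finset.exists_mem_eq_sup _ hne maxc
      rw [hsup]
      exact liftLengths_mono (Iic_subset_Iio.2 (by simpa using hv)) (hmaxc v).1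
  · rcases eq_or_ne j 0 with rfl | hj0
    · exact Nat.zero_le _
    · obtain ⟨v, hvq, hjv⟩ := exists_mem_liftLengths_Iic hj hj0
      exact ((hmaxc v).2 hjv).trans (Finset.le_sup (by simpa using hvq))

end Lifts

theorem maxc_recurrence_general {P Q : Type*}
    [Fintype Q] [PartialOrder Q]
    [DecidableRel ((· < ·) : Q → Q → Prop)]
    (f : Q → Option P) (c : List P) (hne : c ≠ [])
    (maxc : Q → ℕ)
    (hmaxc : ∀ q : Q, IsGreatest
      {j : ℕ | ∃ c' : List Q, IsPosetChain c' ∧ c'.length = j ∧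
        (∀ x ∈ c', x ≤ q) ∧ c'.map f = (c.take j).map some}
      (maxc q)) :
    (∀ q : Q, ∀ j : ℕ, 1 ≤ j → j ≤ c.length →
        (Finset.univ.filter (fun v : Q => v < q)).sup maxc = j - 1 →
        f q = (c)[j - 1]? →
        maxc q = j)
    ∧ (∀ q : Q,
        (¬ ∃ j : ℕ, 1 ≤ j ∧ j ≤ c.length ∧
            (Finset.univ.filter (fun v : Q => v < q)).sup maxc = j - 1 ∧
            f q = (c)[j - 1]?) →
        maxc q = (Finset.univ.filter (fun v : Q => v < q)).sup maxc)
    ∧ ((∃ c' : List Q, IsPosetChain c' ∧ c'.map f = c.map some)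
        ↔ ∃ q : Q, maxc q = c.length) := by
  have hM := isGreatest_liftLengths_Iio hmaxc
  refine ⟨fun q j hj1 hjc hsup hfq => ?_, fun q hnot => ?_, ?_⟩
  · have := eq_succ_of_isGreatest_liftLengths (hmaxc q) (hM q) (by omega) (by rwa [hsup])
    omega
  · exact eq_of_isGreatest_liftLengths (hmaxc q) (hM q) fun ⟨hlt, hfq⟩ =>
      hnot ⟨_ + 1, le_add_self, hlt, rfl, hfq⟩
  · rw [← length_mem_liftLengths_univ_iff]
    constructor
    · intro hlen
      obtain ⟨q, -, hq⟩ := exists_mem_liftLengths_Iic hlen (by simpa using hne)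
      exact ⟨q, le_antisymm (le_length_of_mem_liftLengths (hmaxc q).1) ((hmaxc q).2 hq)⟩
    · rintro ⟨q, hq⟩
      exact liftLengths_mono (subset_univ _) (hq ▸ (hmaxc q).1)

/-- Correctness of the witness-checking dynamic program, for one chain `(c_1, …, c_p)`
of `P`.  For `q : Q`, `maxc q` is the largest `j ≥ 0` such that there is a chain
`(c'_1, …, c'_j)` in `Q` with all `c'_i ≤ q` and `f (c'_i) = c_i` for all `i`
(this is expressed by the `IsGreatest` hypothesis).  Then `maxc` satisfies the
recurrence: writing `M q` for the maximum of `maxc v` over all `v < q` (`0` if there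
is no such `v`), if `M q = j - 1` for some `1 ≤ j ≤ p` with `f q = c_j` then
`maxc q = j`, and otherwise `maxc q = M q`.  Consequently, there is a chain
`(c'_1, …, c'_p)` in `Q` with `f (c'_i) = c_i` for all `i` iff `maxc q = p` for
some element `q` of `Q`. -/
theorem maxc_recurrence {P Q : Type*} [PartialOrder P]
    [Fintype Q] [PartialOrder Q] [DecidableEq Q]
    [DecidableRel ((· < ·) : Q → Q → Prop)]
    (f : Q → Option P) (c : List P) (hc : IsPosetChain c) (hne : c ≠ [])
    (maxc : Q → ℕ)
    (hmaxc : ∀ q : Q, IsGreatest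
      {j : ℕ | ∃ c' : List Q, IsPosetChain c' ∧ c'.length = j ∧
        (∀ x ∈ c', x ≤ q) ∧ c'.map f = (c.take j).map some}
      (maxc q)) :
    (∀ q : Q, ∀ j : ℕ, 1 ≤ j → j ≤ c.length →
        (Finset.univ.filter (fun v : Q => v < q)).sup maxc = j - 1 →
        f q = (c)[j - 1]? →
        maxc q = j)
    ∧ (∀ q : Q,
        (¬ ∃ j : ℕ, 1 ≤ j ∧ j ≤ c.length ∧
            (Finset.univ.filter (fun v : Q => v < q)).sup maxc = j - 1 ∧
            f q = (c)[j - 1]?) →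
        maxc q = (Finset.univ.filter (fun v : Q => v < q)).sup maxc)
    ∧ ((∃ c' : List Q, IsPosetChain c' ∧ c'.map f = c.map some)
        ↔ ∃ q : Q, maxc q = c.length) :=
  maxc_recurrence_general f c hne maxc hmaxc
end
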